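/- arXiv:1502.03326 — 6 statements merged into one kernel-verified Lean document; each statement's English description precedes it below -/
import Mathlib

section
/- For every vertex P = (x,y,z) ∈ V lying in the quadrant Q₄ = {(x,y,z) : x ≥ |y| and x ≥ |z|}, one has h(P + (4,0,0)) = h(P) + 4. (Note P + (4,0,0) ∈ V whenever P ∈ V.) -/
/-- The sodalite vertex set: none of the six sums/differences of pairs of
coordinates is divisible by 4. -/
def SodVertex (p : ℤ × ℤ × ℤ) : Prop :=
  ¬ (4 ∣ p.1 + p.2.1) ∧ ¬ (4 ∣ p.1 - p.2.1) ∧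
  ¬ (4 ∣ p.2.1 + p.2.2) ∧ ¬ (4 ∣ p.2.1 - p.2.2) ∧
  ¬ (4 ∣ p.2.2 + p.1) ∧ ¬ (4 ∣ p.2.2 - p.1)

instance : DecidablePred SodVertex := fun p => by unfold SodVertex; infer_instance

/-- Vertices of the sodalite network. -/
abbrev SodVert := {p : ℤ × ℤ × ℤ // SodVertex p}

/-- Squared Euclidean distance between two points of ℤ³. -/
def sqDist (p q : ℤ × ℤ × ℤ) : ℤ :=
  (p.1 - q.1) ^ 2 + (p.2.1 - q.2.1) ^ 2 + (p.2.2 - q.2.2) ^ 2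

/-- The sodalite graph: vertices adjacent iff squared distance is 2. -/
def sodaliteGraph : SimpleGraph SodVert where
  Adj p q := sqDist p.1 q.1 = 2
  symm := by
    constructor
    intro p q h
    simp only [sqDist] at h ⊢
    ring_nf at h ⊢
    linarith
  loopless := by
    constructor
    intro p h
    simp [sqDist] at h

/-- The base vertex O = (0,1,2). -/
def sodO : SodVert := ⟨(0, 1, 2), by decide⟩

/-- The height of a vertex: graph distance from O. -/
noncomputable def dis (P : SodVert) : ℕ := sodaliteGraph.dist sodO P

/-- The canonical sector U. -/
def inU (p : ℤ × ℤ × ℤ) : Prop := p.1 ≥ p.2.1 ∧ p.2.1 ≥ p.2.2 ∧ p.2.2 ≥ 0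

/-- Number of vertices at height n. -/
noncomputable def S (n : ℤ) : ℕ :=
  Set.ncard {P : SodVert | (dis P : ℤ) = n}

/-- Number of vertices at height n on a coordinate plane. -/
noncomputable def Sbar (n : ℤ) : ℕ :=
  Set.ncard {P : SodVert | (dis P : ℤ) = n ∧ P.1.1 * P.1.2.1 * P.1.2.2 = 0}

/-- Number of vertices at height n in the sector U. -/
noncomputable def S2 (n : ℤ) : ℕ :=
  Set.ncard {P : SodVert | (dis P : ℤ) = n ∧ inU P.1}

/-- Number of vertices at height n in U on a coordinate plane. -/
noncomputable def Sbar1 (n : ℤ) : ℕ :=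
  Set.ncard {P : SodVert | (dis P : ℤ) = n ∧ inU P.1 ∧ P.1.1 * P.1.2.1 * P.1.2.2 = 0}

/-- Number of vertices at height n in U with z = 0 and x - 4 < y. -/
noncomputable def Sbar0 (n : ℤ) : ℕ :=
  Set.ncard {P : SodVert | (dis P : ℤ) = n ∧ inU P.1 ∧ P.1.2.2 = 0 ∧ P.1.1 - 4 < P.1.2.1}

/-- Number of vertices at height n in U with z < 2. -/
noncomputable def S1 (n : ℤ) : ℕ :=
  Set.ncard {P : SodVert | (dis P : ℤ) = n ∧ inU P.1 ∧ P.1.2.2 < 2}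

/-- Number of vertices at height n in U with z < 2 and y < 4. -/
noncomputable def S0 (n : ℤ) : ℕ :=
  Set.ncard {P : SodVert | (dis P : ℤ) = n ∧ inU P.1 ∧ P.1.2.2 < 2 ∧ P.1.2.1 < 4}

/-- Sign function. -/
def sig (a : ℤ) : ℤ := Int.sign a

/-- The explicit height function h. -/
def hFun (p : ℤ × ℤ × ℤ) : ℤ :=
  let x := p.1; let y := p.2.1; let z := p.2.2
  -- (x',y',z') : (|x|,|y|,|z|) sorted into weakly decreasing order
  let x' := max |x| (max |y| |z|)
  let z' := min |x| (min |y| |z|)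
  let y' := |x| + |y| + |z| - x' - z'
  let u : ℤ := if y' % 4 = 0 then 0 else if y' % 4 = 1 then 1
               else if y' % 4 = 2 then 0 else -1
  let v : ℤ := if x' % 4 = 0 then 1 else if x' % 4 = 1 then 0
               else if x' % 4 = 2 then -1 else 0
  let s := u * v
  -- h' = x' + y'/2 - s/2, an integer on vertices
  let h' := x' + (y' - s) / 2
  let c : ℤ :=
    if |x| ≥ |y| ∧ |y| ≥ |z| then 0
    else if |x| ≥ |z| ∧ |z| ≥ |y| then -(sig z)
    else if |y| ≥ |x| ∧ |x| ≥ |z| then -(sig y)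
    else if |y| ≥ |z| ∧ |z| ≥ |x| ∧ y * z ≤ 0 then 0
    else if |y| ≥ |z| ∧ |z| ≥ |x| ∧ y * z ≥ 0 then -2 * sig z
    else if |z| ≥ |x| ∧ |x| ≥ |y| then -2 * sig z
    else if |z| ≥ |y| ∧ |y| ≥ |x| ∧ y * z ≤ 0 then -(sig z)
    else -3 * sig y
  h' + c

/-- The quadrant associated with the translation T₃ = +(2,2,2). -/
def inQ3 (p : ℤ × ℤ × ℤ) : Prop :=
  p.1 + p.2.1 ≥ 0 ∧ p.2.1 + p.2.2 ≥ 0 ∧ p.2.2 + p.1 ≥ 0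

/-- The quadrant associated with the translation T₄ = +(4,0,0). -/
def inQ4 (p : ℤ × ℤ × ℤ) : Prop :=
  p.1 ≥ |p.2.1| ∧ p.1 ≥ |p.2.2|

/-- The quadrant associated with the translation T₆ = +(4,4,0). -/
def inQ6 (p : ℤ × ℤ × ℤ) : Prop :=
  p.2.1 ≥ |p.2.2| ∧ p.1 ≥ p.2.1 + |p.2.2|

/-! On a vertex of `Q₄` the coordinate `x` strictly dominates `|y|` and `|z|` (equality would make
`x - y`, `x + y`, `x - z` or `x + z` vanish). Hence `x' = x` and `y' = max |y| |z|`, the translation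
raises `x'` by 4 without changing `x' mod 4` (so `s` is unchanged), and the correction `c` only sees
the order of `|y|` and `|z|`. -/

theorem abs_ne_abs_of_not_dvd_add_of_not_dvd_sub {n x y : ℤ} (hadd : ¬ n ∣ x + y)
    (hsub : ¬ n ∣ x - y) : |x| ≠ |y| := by
  intro h
  rcases abs_eq_abs.mp h with rfl | rfl
  · exact hsub (by simp)
  · exact hadd (by simp)

theorem SodVertex.abs_lt_of_inQ4 {p : ℤ × ℤ × ℤ} (hV : SodVertex p) (hQ : inQ4 p) :
    |p.2.1| < p.1 ∧ |p.2.2| < p.1 := by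
  obtain ⟨h1, h2, -, -, h5, h6⟩ := hV
  have hy := abs_ne_abs_of_not_dvd_add_of_not_dvd_sub h1 h2
  have hz := abs_ne_abs_of_not_dvd_add_of_not_dvd_sub (add_comm p.2.2 p.1 ▸ h5)
    (by rwa [← dvd_neg, neg_sub])
  have hx : |p.1| = p.1 := abs_of_nonneg ((abs_nonneg _).trans hQ.1)
  rw [hx] at hy hz
  exact ⟨lt_of_le_of_ne hQ.1 (Ne.symm hy), lt_of_le_of_ne hQ.2 (Ne.symm hz)⟩

/-- The factor `u` of `s = u * v`, as a function of `y'`. -/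
def sodaliteU (n : ℤ) : ℤ :=
  if n % 4 = 0 then 0 else if n % 4 = 1 then 1 else if n % 4 = 2 then 0 else -1

/-- The factor `v` of `s = u * v`, as a function of `x'`. -/
def sodaliteV (n : ℤ) : ℤ :=
  if n % 4 = 0 then 1 else if n % 4 = 1 then 0 else if n % 4 = 2 then -1 else 0

theorem sodaliteV_add_four (n : ℤ) : sodaliteV (n + 4) = sodaliteV n := by
  simp only [sodaliteV, Int.add_emod_right]

theorem hFun_of_abs_lt {x y z : ℤ} (hy : |y| < x) (hz : |z| < x) :
    hFun (x, y, z) = x + (max |y| |z| - sodaliteU (max |y| |z|) * sodaliteV x) / 2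
      + if |z| ≤ |y| then 0 else -sig z := by
  have hx : |x| = x := abs_of_pos ((abs_nonneg y).trans_lt hy)
  simp only [hFun, sodaliteU, sodaliteV, hx]
  generalize |y| = a at hy ⊢
  generalize |z| = b at hz ⊢
  have hmax : max x (max a b) = x := by omega
  have hmin : min x (min a b) = min a b := by omega
  have hmid : x + a + b - x - min a b = max a b := by omega
  rw [hmax, hmin, hmid]
  congr 1
  split_ifs <;> omega

/-- Within its quadrant, the translation T₄ = +(4,0,0) respects h, adding 4. -/
theorem hFun_T4 (p : ℤ × ℤ × ℤ) (hV : SodVertex p) (hQ : inQ4 p) :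
    hFun (p + (4, 0, 0)) = hFun p + 4 := by
  obtain ⟨x, y, z⟩ := p
  obtain ⟨hy, hz⟩ : |y| < x ∧ |z| < x := hV.abs_lt_of_inQ4 hQ
  have hshift : (x, y, z) + ((4, 0, 0) : ℤ × ℤ × ℤ) = (x + 4, y, z) := by simp
  rw [hshift, hFun_of_abs_lt hy hz, hFun_of_abs_lt (by omega) (by omega), sodaliteV_add_four]
  ring
end

section
/- For every vertex P = (x,y,z) ∈ V lying in the quadrant Q₆ = {(x,y,z) : y ≥ |z| and x ≥ y + |z|}, one has h(P + (4,4,0)) = h(P) + 6. (Note P + (4,4,0) ∈ V whenever P ∈ V.) -/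
/-- The factor `s = u * v` in the definition of `hFun`, as a function of `y'` and `x'`. -/
def sFactor (y' x' : ℤ) : ℤ :=
  (if y' % 4 = 0 then 0 else if y' % 4 = 1 then 1 else if y' % 4 = 2 then 0 else -1) *
    (if x' % 4 = 0 then 1 else if x' % 4 = 1 then 0 else if x' % 4 = 2 then -1 else 0)

lemma sFactor_add_four (y' x' : ℤ) : sFactor (y' + 4) (x' + 4) = sFactor y' x' := by
  simp only [sFactor, Int.add_emod_right]

lemma hFun_of_abs_le {x y z : ℤ} (hyx : |y| ≤ |x|) (hzy : |z| ≤ |y|) :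
    hFun (x, y, z) = |x| + (|y| - sFactor |y| |x|) / 2 := by
  have hmax : max |x| (max |y| |z|) = |x| := max_eq_left (max_le hyx (hzy.trans hyx))
  have hmin : min |x| (min |y| |z|) = |z| := by
    rw [min_eq_right hzy, min_eq_right (hzy.trans hyx)]
  have hmid : |x| + |y| + |z| - |x| - |z| = |y| := by ring
  simp only [hFun, hmax, hmin, hmid, if_pos (And.intro hyx hzy), add_zero]
  rfl

/-- The sector `|z| ≤ y ≤ x` is mapped into itself by `+(4,4,0)`; there `hFun` is
`x' + (y' - s) / 2` with `s` `4`-periodic in both arguments, so it moves by `4 + 2`. -/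
lemma hFun_add_four_four {x y z : ℤ} (hzy : |z| ≤ y) (hyx : y ≤ x) :
    hFun (x + 4, y + 4, z) = hFun (x, y, z) + 6 := by
  have hy0 : 0 ≤ y := (abs_nonneg z).trans hzy
  have hx : |x| = x := abs_of_nonneg (hy0.trans hyx)
  have hy : |y| = y := abs_of_nonneg hy0
  have hx4 : |x + 4| = x + 4 := abs_of_nonneg (by omega)
  have hy4 : |y + 4| = y + 4 := abs_of_nonneg (by omega)
  rw [hFun_of_abs_le (by rw [hx4, hy4]; omega) (by rw [hy4]; omega),
    hFun_of_abs_le (by rwa [hx, hy]) (by rwa [hy]), hx, hy, hx4, hy4, sFactor_add_four]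
  omega

theorem hFun_T6_general (p : ℤ × ℤ × ℤ) (hQ : inQ6 p) :
    hFun (p + (4, 4, 0)) = hFun p + 6 := by
  obtain ⟨x, y, z⟩ := p
  obtain ⟨hzy, hyx⟩ := hQ
  have hshift : (x, y, z) + ((4, 4, 0) : ℤ × ℤ × ℤ) = (x + 4, y + 4, z) := by simp
  rw [hshift]
  exact hFun_add_four_four hzy (by linarith [abs_nonneg z])

/-- Within its quadrant, the translation T₆ = +(4,4,0) respects h, adding 6. -/
theorem hFun_T6 (p : ℤ × ℤ × ℤ) (hV : SodVertex p) (hQ : inQ6 p) :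
    hFun (p + (4, 4, 0)) = hFun p + 6 :=
  hFun_T6_general p hQ
end

section
/- Let P = (x,y,z) ∈ V ∩ U with h(P) ≥ 15. Then at least one of the following holds: (i) P, P − (2,2,2), every neighbour Q of P in G, and every Q − (2,2,2) for Q a neighbour of P all lie in the quadrant Q₃ = {(x,y,z) : x+y ≥ 0, y+z ≥ 0, z+x ≥ 0}; or (ii) P, P − (4,0,0), every neighbour Q of P in G, and every Q − (4,0,0) for Q a neighbour of P all lie in the quadrant Q₄ = {(x,y,z) : x ≥ |y| and x ≥ |z|}. -/
/-!
In the sector `U` the correction term `c` vanishes and `|s| ≤ 1`, so `h ≤ x + (y + 1)/2`;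
hence `h ≥ 15` forces `2x + y ≥ 29`. Neighbours differ from `P` by at most one in each
coordinate. If `y + z ≥ 6`, every pairwise sum stays nonnegative after subtracting `(2,2,2)`
and moving one step; otherwise `y ≤ 5`, so `x ≥ 12` dominates `|y|` and `|z|` with room for
subtracting `(4,0,0)` and moving one step.
-/

def WithinOne (p q : ℤ × ℤ × ℤ) : Prop :=
  |p.1 - q.1| ≤ 1 ∧ |p.2.1 - q.2.1| ≤ 1 ∧ |p.2.2 - q.2.2| ≤ 1

lemma withinOne_refl (p : ℤ × ℤ × ℤ) : WithinOne p p := by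
  simp [WithinOne]

lemma abs_le_one_of_sq_le_two {a : ℤ} (h : a ^ 2 ≤ 2) : |a| ≤ 1 := by
  by_contra! ha
  nlinarith [sq_abs a]

lemma withinOne_of_sqDist_eq_two {p q : ℤ × ℤ × ℤ} (h : sqDist p q = 2) : WithinOne p q := by
  unfold sqDist at h
  have h1 := sq_nonneg (p.1 - q.1)
  have h2 := sq_nonneg (p.2.1 - q.2.1)
  have h3 := sq_nonneg (p.2.2 - q.2.2)
  exact ⟨abs_le_one_of_sq_le_two (by linarith), abs_le_one_of_sq_le_two (by linarith),
    abs_le_one_of_sq_le_two (by linarith)⟩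

lemma two_mul_hFun_le_of_inU {p : ℤ × ℤ × ℤ} (hp : inU p) :
    2 * hFun p ≤ 2 * p.1 + p.2.1 + 1 := by
  obtain ⟨x, y, z⟩ := p
  obtain ⟨hxy, hyz, hz⟩ := hp
  dsimp only at hxy hyz hz
  have hax : |x| = x := abs_of_nonneg (by omega)
  have hay : |y| = y := abs_of_nonneg (by omega)
  have haz : |z| = z := abs_of_nonneg hz
  have hmax : max x (max y z) = x := by omega
  have hmin : min x (min y z) = z := by omega
  simp only [hFun, hax, hay, haz, hmax, hmin, if_pos (And.intro hxy hyz)]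
  split_ifs <;> omega

lemma inQ3_of_withinOne {p q : ℤ × ℤ × ℤ} (hp : inU p) (hsum : 6 ≤ p.2.1 + p.2.2)
    (hq : WithinOne p q) :
    inQ3 q ∧ inQ3 (q - (2, 2, 2)) := by
  obtain ⟨hx, hy, hz⟩ := hq
  rw [abs_le] at hx hy hz
  obtain ⟨hxy, hyz, -⟩ := hp
  simp only [inQ3, Prod.fst_sub, Prod.snd_sub]
  omega

lemma inQ4_of_withinOne {p q : ℤ × ℤ × ℤ} (hp : inU p) (hgap : p.2.1 + 6 ≤ p.1)
    (hq : WithinOne p q) :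
    inQ4 q ∧ inQ4 (q - (4, 0, 0)) := by
  obtain ⟨hx, hy, hz⟩ := hq
  rw [abs_le] at hx hy hz
  obtain ⟨-, hyz, hz0⟩ := hp
  simp only [inQ4, Prod.fst_sub, Prod.snd_sub, abs_le]
  omega

/-- For a vertex `P ∈ U` with `h(P) ≥ 15`, the point `P`, its image under the
inverse translation, its neighbours, and their images under the inverse
translation all lie in one quadrant (either the T₃ or the T₄ quadrant). -/
theorem sodalite_translation_sector (P : SodVert) (hU : inU P.1)
    (hh : 15 ≤ hFun P.1) :
    (inQ3 P.1 ∧ inQ3 (P.1 - (2, 2, 2)) ∧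
      ∀ Q : SodVert, sodaliteGraph.Adj P Q → inQ3 Q.1 ∧ inQ3 (Q.1 - (2, 2, 2))) ∨
    (inQ4 P.1 ∧ inQ4 (P.1 - (4, 0, 0)) ∧
      ∀ Q : SodVert, sodaliteGraph.Adj P Q → inQ4 Q.1 ∧ inQ4 (Q.1 - (4, 0, 0))) := by
  have hheight : 29 ≤ 2 * P.1.1 + P.1.2.1 := by linarith [two_mul_hFun_le_of_inU hU]
  have hnear (Q : SodVert) (hQ : sodaliteGraph.Adj P Q) : WithinOne P.1 Q.1 :=
    withinOne_of_sqDist_eq_two hQ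
  by_cases hsum : 6 ≤ P.1.2.1 + P.1.2.2
  · obtain ⟨hP, hP'⟩ := inQ3_of_withinOne hU hsum (withinOne_refl P.1)
    exact Or.inl ⟨hP, hP', fun Q hQ => inQ3_of_withinOne hU hsum (hnear Q hQ)⟩
  · have hgap : P.1.2.1 + 6 ≤ P.1.1 := by have := hU.2.2; omega
    obtain ⟨hP, hP'⟩ := inQ4_of_withinOne hU hgap (withinOne_refl P.1)
    exact Or.inr ⟨hP, hP', fun Q hQ => inQ4_of_withinOne hU hgap (hnear Q hQ)⟩
end

section
/- There exists an integer N such that for every integer n ≥ N, S̄₁(n) = S̄₁(n−4) + S̄₀(n). -/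
/-!
The potential `φ(x, y, z) = x + ⌊(y + [x + y ≡ 3 mod 4]) / 2⌋` changes by at most one along an
edge of the sodalite graph, and from every vertex of the slab `0 ≤ z ≤ 2`, `0 ≤ y ≤ x + 2`,
`0 ≤ x` other than `O` some neighbour inside the slab lowers it by exactly one. Hence the height
equals `φ` on the slab, in particular on the floor `z = 0`, `0 ≤ y ≤ x` of the sector, which is
where the vertices counted by `S̄₁` lie. As `φ` grows by `4` under the translation by `(4, 0, 0)`,
that translation maps the floor at height `n - 4` bijectively onto the floor points at height `n`
with `y ≤ x - 4`; the other floor points at height `n` are those counted by `S̄₀(n)`.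
-/

def fccSteps : Finset (ℤ × ℤ × ℤ) :=
  {(1, 1, 0), (1, -1, 0), (-1, 1, 0), (-1, -1, 0), (1, 0, 1), (1, 0, -1), (-1, 0, 1), (-1, 0, -1),
    (0, 1, 1), (0, 1, -1), (0, -1, 1), (0, -1, -1)}

lemma sq_add_sq_add_sq_eq_two_iff (u v w : ℤ) :
    u ^ 2 + v ^ 2 + w ^ 2 = 2 ↔ (u, v, w) ∈ fccSteps := by
  constructor
  · intro h
    obtain ⟨hu₁, hu₂⟩ : -1 ≤ u ∧ u ≤ 1 := by
      constructor <;> nlinarith [sq_nonneg v, sq_nonneg w]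
    obtain ⟨hv₁, hv₂⟩ : -1 ≤ v ∧ v ≤ 1 := by
      constructor <;> nlinarith [sq_nonneg u, sq_nonneg w]
    obtain ⟨hw₁, hw₂⟩ : -1 ≤ w ∧ w ≤ 1 := by
      constructor <;> nlinarith [sq_nonneg u, sq_nonneg v]
    interval_cases u <;> interval_cases v <;> interval_cases w <;> simp_all [fccSteps]
  · have hsteps : ∀ d ∈ fccSteps, d.1 ^ 2 + d.2.1 ^ 2 + d.2.2 ^ 2 = 2 := by decide
    exact hsteps _

lemma sqDist_eq_two_iff {p q : ℤ × ℤ × ℤ} : sqDist p q = 2 ↔ q - p ∈ fccSteps := by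
  obtain ⟨x, y, z⟩ := p
  obtain ⟨a, b, c⟩ := q
  rw [sqDist, Prod.mk_sub_mk, Prod.mk_sub_mk, ← sq_add_sq_add_sq_eq_two_iff]
  ring_nf

/-- On vertices of the sector `U` this is the paper's `hFun = x + (y - s) / 2`: its correction
term `s ∈ {0, ±1}` is `±1` exactly when `y` is odd and `x + y ≡ ±1 (mod 4)`. -/
def sodPotential (p : ℤ × ℤ × ℤ) : ℤ := p.1 + (p.2.1 + (p.1 + p.2.1) % 4 / 3) / 2

def InSlab (p : ℤ × ℤ × ℤ) : Prop :=
  0 ≤ p.1 ∧ 0 ≤ p.2.1 ∧ p.2.1 ≤ p.1 + 2 ∧ 0 ≤ p.2.2 ∧ p.2.2 ≤ 2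

lemma sodPotential_le_of_adj {P Q : SodVert} (h : sodaliteGraph.Adj P Q) :
    sodPotential Q.1 ≤ sodPotential P.1 + 1 := by
  obtain ⟨d, hd, hQ⟩ : ∃ d ∈ fccSteps, Q.1 = P.1 + d :=
    ⟨Q.1 - P.1, sqDist_eq_two_iff.1 h, (add_sub_cancel _ _).symm⟩
  obtain ⟨⟨x, y, z⟩, hP⟩ := P
  obtain ⟨q, hQv⟩ := Q
  subst hQ
  simp only [fccSteps, Finset.mem_insert, Finset.mem_singleton] at hd
  rcases hd with rfl | rfl | rfl | rfl | rfl | rfl | rfl | rfl | rfl | rfl | rfl | rfl <;>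
    simp only [SodVertex, sodPotential, Prod.mk_add_mk] at hP hQv ⊢ <;> omega

lemma sodPotential_le_of_walk {P Q : SodVert} (w : sodaliteGraph.Walk P Q) :
    sodPotential Q.1 ≤ sodPotential P.1 + w.length := by
  induction w with
  | nil => simp
  | cons h _ ih =>
    rw [SimpleGraph.Walk.length_cons]
    have := sodPotential_le_of_adj h
    push_cast
    linarith

lemma exists_descending_step {p : ℤ × ℤ × ℤ} (hp : SodVertex p) (hs : InSlab p)
    (hpos : 0 < sodPotential p) :
    ∃ d ∈ fccSteps, SodVertex (p + d) ∧ InSlab (p + d) ∧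
      sodPotential (p + d) = sodPotential p - 1 := by
  obtain ⟨x, y, z⟩ := p
  simp only [SodVertex, InSlab, sodPotential, Prod.fst_add, Prod.snd_add] at hp hs hpos ⊢
  -- The residues of `x` and `y` mod 4 and `z` determine a descending step, except that on
  -- `y = 0` the step lowering `y` leaves the slab.
  rcases (by omega : z = 0 ∨ z = 1 ∨ z = 2) with rfl | rfl | rfl <;>
  rcases (by omega : x % 4 = 0 ∨ x % 4 = 1 ∨ x % 4 = 2 ∨ x % 4 = 3) with hx | hx | hx | hx <;>
  rcases (by omega : y = 0 ∨ (0 < y ∧ y % 4 = 0) ∨ y % 4 = 1 ∨ y % 4 = 2 ∨ y % 4 = 3) with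
    hy | hy | hy | hy | hy <;>
  first
  | omega
  | exact ⟨(-1, 1, 0), by decide, by dsimp only; omega⟩
  | exact ⟨(-1, -1, 0), by decide, by dsimp only; omega⟩
  | exact ⟨(-1, 0, 1), by decide, by dsimp only; omega⟩
  | exact ⟨(-1, 0, -1), by decide, by dsimp only; omega⟩
  | exact ⟨(0, -1, 1), by decide, by dsimp only; omega⟩
  | exact ⟨(0, -1, -1), by decide, by dsimp only; omega⟩

lemma eq_sodO_of_sodPotential_eq_zero {P : SodVert} (hs : InSlab P.1)
    (h0 : sodPotential P.1 = 0) : P = sodO := by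
  obtain ⟨⟨x, y, z⟩, hP⟩ := P
  simp only [SodVertex, InSlab, sodPotential] at hP hs h0
  obtain rfl : x = 0 := by omega
  obtain ⟨rfl, rfl⟩ : y = 1 ∧ z = 2 := by omega
  rfl

lemma exists_walk_length_eq_sodPotential (n : ℕ) {p : ℤ × ℤ × ℤ} (hp : SodVertex p)
    (hs : InSlab p) (hn : sodPotential p = n) :
    ∃ w : sodaliteGraph.Walk sodO ⟨p, hp⟩, w.length = n := by
  induction n generalizing p with
  | zero =>
    rw [eq_sodO_of_sodPotential_eq_zero (P := ⟨p, hp⟩) hs hn]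
    exact ⟨.nil, rfl⟩
  | succ n ih =>
    obtain ⟨d, hd, hv, hs', hpred⟩ := exists_descending_step hp hs (by omega)
    obtain ⟨w, hw⟩ := ih hv hs' (by push_cast at hn; omega)
    have hadj : sodaliteGraph.Adj ⟨p, hp⟩ ⟨p + d, hv⟩ :=
      sqDist_eq_two_iff.2 (by rwa [add_sub_cancel_left])
    exact ⟨w.concat hadj.symm, by rw [SimpleGraph.Walk.length_concat, hw]⟩

lemma dis_eq_sodPotential {P : SodVert} (hs : InSlab P.1) : (dis P : ℤ) = sodPotential P.1 := by
  obtain ⟨p, hp⟩ := P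
  have hnonneg : 0 ≤ sodPotential p := by
    simp only [InSlab, sodPotential] at hs ⊢; omega
  obtain ⟨w, hw⟩ :=
    exists_walk_length_eq_sodPotential _ hp hs (Int.toNat_of_nonneg hnonneg).symm
  obtain ⟨w', hw'⟩ := w.reachable.exists_walk_length_eq_dist
  have hle : dis ⟨p, hp⟩ ≤ w.length := SimpleGraph.dist_le w
  have hge : sodPotential p ≤ sodPotential sodO.1 + w'.length := sodPotential_le_of_walk w'
  have hO : sodPotential sodO.1 = 0 := by decide
  show (dis ⟨p, hp⟩ : ℤ) = sodPotential p
  unfold dis at hle ⊢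
  omega

def OnFloor (p : ℤ × ℤ × ℤ) : Prop := 0 ≤ p.2.1 ∧ p.2.1 ≤ p.1 ∧ p.2.2 = 0

lemma OnFloor.inSlab {p : ℤ × ℤ × ℤ} (h : OnFloor p) : InSlab p := by
  simp only [OnFloor, InSlab] at h ⊢; omega

lemma inU_and_mul_eq_zero_iff_onFloor {p : ℤ × ℤ × ℤ} (hp : SodVertex p) :
    inU p ∧ p.1 * p.2.1 * p.2.2 = 0 ↔ OnFloor p := by
  obtain ⟨x, y, z⟩ := p
  simp only [SodVertex, inU, OnFloor, mul_eq_zero] at hp ⊢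
  omega

def floorLayer (n : ℤ) : Set SodVert := {P | (dis P : ℤ) = n ∧ OnFloor P.1}

def floorStrip (n : ℤ) : Set SodVert :=
  {P | (dis P : ℤ) = n ∧ inU P.1 ∧ P.1.2.2 = 0 ∧ P.1.1 - 4 < P.1.2.1}

lemma Sbar1_eq_ncard_floorLayer (n : ℤ) : Sbar1 n = (floorLayer n).ncard := by
  unfold Sbar1 floorLayer
  congr 1
  ext P
  exact and_congr_right fun _ => inU_and_mul_eq_zero_iff_onFloor P.2

lemma sodVertex_add_four_iff {p : ℤ × ℤ × ℤ} : SodVertex (p + (4, 0, 0)) ↔ SodVertex p := by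
  obtain ⟨x, y, z⟩ := p
  simp only [SodVertex, Prod.mk_add_mk]
  omega

def shiftX4 (P : SodVert) : SodVert := ⟨P.1 + (4, 0, 0), sodVertex_add_four_iff.2 P.2⟩

lemma shiftX4_injective : Function.Injective shiftX4 := fun _ _ h =>
  Subtype.ext (add_right_cancel (congrArg Subtype.val h))

lemma dis_shiftX4 {P : SodVert} (hP : OnFloor P.1) : (dis (shiftX4 P) : ℤ) = dis P + 4 := by
  have hP' : OnFloor (shiftX4 P).1 := by
    simp only [OnFloor, shiftX4, Prod.fst_add, Prod.snd_add] at hP ⊢; omega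
  rw [dis_eq_sodPotential hP.inSlab, dis_eq_sodPotential hP'.inSlab]
  simp only [sodPotential, shiftX4, Prod.fst_add, Prod.snd_add]
  omega

lemma floorLayer_finite (n : ℤ) : (floorLayer n).Finite := by
  refine ((Set.finite_Icc ((0 : ℤ), (0 : ℤ), (0 : ℤ)) (n, n, 0)).preimage
    Subtype.val_injective.injOn).subset ?_
  rintro P ⟨hd, hP⟩
  rw [dis_eq_sodPotential hP.inSlab] at hd
  obtain ⟨⟨x, y, z⟩, _⟩ := P
  simp only [OnFloor, sodPotential] at hP hd
  simp only [Set.mem_preimage, Set.mem_Icc, Prod.mk_le_mk]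
  omega

lemma floorLayer_eq_floorStrip_union (n : ℤ) :
    floorLayer n = floorStrip n ∪ shiftX4 '' floorLayer (n - 4) := by
  ext P
  constructor
  · rintro ⟨hd, hP⟩
    by_cases hlt : P.1.1 - 4 < P.1.2.1
    · exact Or.inl ⟨hd, ((inU_and_mul_eq_zero_iff_onFloor P.2).2 hP).1, hP.2.2, hlt⟩
    · obtain ⟨p, hp⟩ := P
      have hv : SodVertex (p - (4, 0, 0)) := sodVertex_add_four_iff.1 (by rwa [sub_add_cancel])
      have hQ : OnFloor (p - (4, 0, 0)) := by
        simp only [OnFloor, Prod.fst_sub, Prod.snd_sub] at hP hlt ⊢; omega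
      have hshift : shiftX4 ⟨p - (4, 0, 0), hv⟩ = ⟨p, hp⟩ := Subtype.ext (sub_add_cancel _ _)
      have hdis := dis_shiftX4 (P := ⟨p - (4, 0, 0), hv⟩) hQ
      rw [hshift] at hdis
      exact Or.inr ⟨⟨p - (4, 0, 0), hv⟩, ⟨by omega, hQ⟩, hshift⟩
  · rintro (⟨hd, hU, hz, -⟩ | ⟨Q, ⟨hd, hQ⟩, rfl⟩)
    · exact ⟨hd, (inU_and_mul_eq_zero_iff_onFloor P.2).1 ⟨hU, by rw [hz, mul_zero]⟩⟩
    · refine ⟨by rw [dis_shiftX4 hQ, hd]; ring, ?_⟩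
      simp only [OnFloor, shiftX4, Prod.fst_add, Prod.snd_add] at hQ ⊢; omega

lemma disjoint_floorStrip_image_shiftX4 (n : ℤ) :
    Disjoint (floorStrip n) (shiftX4 '' floorLayer (n - 4)) := by
  rw [Set.disjoint_left]
  rintro _ ⟨-, -, -, hlt⟩ ⟨Q, ⟨-, hQ⟩, rfl⟩
  simp only [OnFloor, shiftX4, Prod.fst_add, Prod.snd_add] at hQ hlt
  omega

lemma Sbar1_eq_Sbar1_sub_four_add_Sbar0 (n : ℤ) : Sbar1 n = Sbar1 (n - 4) + Sbar0 n := by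
  have hstrip : (floorStrip n).Finite := (floorLayer_finite n).subset <| by
    rw [floorLayer_eq_floorStrip_union]; exact Set.subset_union_left
  rw [Sbar1_eq_ncard_floorLayer, Sbar1_eq_ncard_floorLayer, floorLayer_eq_floorStrip_union,
    Set.ncard_union_eq (disjoint_floorStrip_image_shiftX4 n) hstrip
      ((floorLayer_finite _).image _), Set.ncard_image_of_injective _ shiftX4_injective, add_comm]
  rfl

/-- Eventually, `S̄₁(n) = S̄₁(n-4) + S̄₀(n)`. -/
theorem sodalite_Sbar1_recurrence :
    ∃ N : ℤ, ∀ n : ℤ, N ≤ n → Sbar1 n = Sbar1 (n - 4) + Sbar0 n :=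
  ⟨0, fun n _ => Sbar1_eq_Sbar1_sub_four_add_Sbar0 n⟩
end

section
/- There exists an integer N such that for every integer n ≥ N, S̄₀(n) = S̄₀(n−6); consequently S̄₀ is eventually periodic with period 6. -/
/-!
The potential `2x + y - u(y) v(x)` (twice the `h'` of `hFun`, evaluated at the unsorted
coordinates) rises by at most 2 along every edge. Along the explicit path `geodesic` from `O`,
which from its fourth vertex on repeats every 6 steps up to the translation by `(4, 4, 0)`, it
rises by exactly 2 per step, so `geodesic n` has height `n`. Every vertex counted by `S̄₀` lies
on this path, hence `S̄₀(n)` is 1 or 0 according as `geodesic n` lies in the strip or not, and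
this is 6-periodic once `n - 6 ≥ 3`.
-/

theorem Nat.induction_of_periodic_step {a p : ℕ} (hp : 0 < p) {P : ℕ → Prop}
    (base : ∀ n < a + p, P n) (step : ∀ n, a ≤ n → P n → P (n + p)) (n : ℕ) : P n := by
  induction n using Nat.strong_induction_on with
  | _ n ih =>
    rcases Nat.lt_or_ge n (a + p) with h | h
    · exact base n h
    · obtain ⟨m, rfl⟩ := Nat.exists_eq_add_of_le' (le_of_add_le_right h)
      exact step m (by omega) (ih m (by omega))

namespace SimpleGraph

variable {V : Type*} {G : SimpleGraph V}

theorem Walk.apply_le_add_mul_length (f : V → ℤ) (c : ℤ)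
    (hf : ∀ a b, G.Adj a b → f b ≤ f a + c) {u v : V} (w : G.Walk u v) :
    f v ≤ f u + c * w.length := by
  induction w with
  | nil => simp
  | cons hadj _ ih =>
    rw [Walk.length_cons, Nat.cast_succ]
    linarith [hf _ _ hadj]

theorem dist_eq_length_of_apply_eq (f : V → ℤ) {c : ℤ} (hc : 0 < c)
    (hf : ∀ a b, G.Adj a b → f b ≤ f a + c) {u v : V} (w : G.Walk u v)
    (hw : f v = f u + c * w.length) : G.dist u v = w.length := by
  obtain ⟨w', hw'⟩ := w.reachable.exists_walk_length_eq_dist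
  have hlong : c * w.length ≤ c * w'.length := by
    linarith [w'.apply_le_add_mul_length f c hf]
  have : w.length ≤ w'.length := by exact_mod_cast le_of_mul_le_mul_left hlong hc
  exact le_antisymm (dist_le w) (hw' ▸ this)

end SimpleGraph

namespace Sodalite

def shift (p : ℤ × ℤ × ℤ) : ℤ × ℤ × ℤ := (p.1 + 4, p.2.1 + 4, p.2.2)

theorem sodVertex_shift {p : ℤ × ℤ × ℤ} (hp : SodVertex p) : SodVertex (shift p) := by
  obtain ⟨x, y, z⟩ := p
  simp only [SodVertex, shift] at *
  omega

theorem sqDist_shift (p q : ℤ × ℤ × ℤ) : sqDist (shift p) (shift q) = sqDist p q := by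
  simp only [sqDist, shift]
  ring

theorem inU_shift {p : ℤ × ℤ × ℤ} (hp : inU p) : inU (shift p) := by
  obtain ⟨x, y, z⟩ := p
  simp only [inU, shift] at *
  omega

def InStrip (p : ℤ × ℤ × ℤ) : Prop := inU p ∧ p.2.2 = 0 ∧ p.1 - 4 < p.2.1

instance : DecidablePred InStrip := fun p => by unfold InStrip inU; infer_instance

theorem inStrip_shift_iff {p : ℤ × ℤ × ℤ} (hp : inU p) : InStrip (shift p) ↔ InStrip p := by
  obtain ⟨x, y, z⟩ := p
  simp only [InStrip, hp, inU_shift hp, true_and]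
  simp only [shift]
  omega

def uFun (y : ℤ) : ℤ := if y % 4 = 1 then 1 else if y % 4 = 3 then -1 else 0

def vFun (x : ℤ) : ℤ := if x % 4 = 0 then 1 else if x % 4 = 2 then -1 else 0

def potential (p : ℤ × ℤ × ℤ) : ℤ := 2 * p.1 + p.2.1 - uFun p.2.1 * vFun p.1

theorem potential_shift (p : ℤ × ℤ × ℤ) : potential (shift p) = potential p + 12 := by
  simp only [potential, shift, uFun, vFun, Int.add_emod_right]
  ring

set_option maxHeartbeats 400000 in
theorem potential_le_of_adj {p q : ℤ × ℤ × ℤ} (hp : SodVertex p) (hq : SodVertex q)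
    (h : sqDist p q = 2) : potential q ≤ potential p + 2 := by
  obtain ⟨a, b, c⟩ := p
  obtain ⟨d, e, f⟩ := q
  simp only [SodVertex, sqDist] at hp hq h
  have h1 : -1 ≤ a - d ∧ a - d ≤ 1 := by
    constructor <;> nlinarith [sq_nonneg (b - e), sq_nonneg (c - f)]
  have h2 : -1 ≤ b - e ∧ b - e ≤ 1 := by
    constructor <;> nlinarith [sq_nonneg (a - d), sq_nonneg (c - f)]
  have h3 : -1 ≤ c - f ∧ c - f ≤ 1 := by
    constructor <;> nlinarith [sq_nonneg (a - d), sq_nonneg (b - e)]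
  simp only [potential, uFun, vFun]
  split_ifs <;> omega

def geodesic : ℕ → ℤ × ℤ × ℤ
  | 0 => (0, 1, 2)
  | 1 => (1, 0, 2)
  | 2 => (2, 0, 1)
  | 3 => (2, 1, 0)
  | 4 => (3, 2, 0)
  | 5 => (4, 2, 1)
  | 6 => (5, 2, 0)
  | 7 => (6, 3, 0)
  | 8 => (6, 4, 1)
  | n + 9 => shift (geodesic (n + 3))

theorem geodesic_add_six {n : ℕ} (hn : 3 ≤ n) : geodesic (n + 6) = shift (geodesic n) := by
  obtain ⟨m, rfl⟩ := Nat.exists_eq_add_of_le' hn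
  rfl

theorem geodesic_add_six_mul {n : ℕ} (hn : 3 ≤ n) (k : ℕ) :
    geodesic (n + 6 * k) =
      ((geodesic n).1 + 4 * k, (geodesic n).2.1 + 4 * k, (geodesic n).2.2) := by
  induction k with
  | zero => simp
  | succ k ih =>
    rw [show n + 6 * (k + 1) = n + 6 * k + 6 by ring, geodesic_add_six (by omega), ih]
    simp only [shift]
    push_cast
    ring_nf

theorem sodVertex_geodesic (n : ℕ) : SodVertex (geodesic n) := by
  induction n using Nat.induction_of_periodic_step (a := 3) (p := 6) (by norm_num) with
  | base n h => interval_cases n <;> decide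
  | step n hn ih => rw [geodesic_add_six hn]; exact sodVertex_shift ih

theorem sqDist_geodesic_succ (n : ℕ) : sqDist (geodesic n) (geodesic (n + 1)) = 2 := by
  induction n using Nat.induction_of_periodic_step (a := 3) (p := 6) (by norm_num) with
  | base n h => interval_cases n <;> decide
  | step n hn ih =>
    rw [geodesic_add_six hn, show n + 6 + 1 = n + 1 + 6 by ring, geodesic_add_six (by omega),
      sqDist_shift, ih]

theorem potential_geodesic (n : ℕ) : potential (geodesic n) = 2 * n := by
  induction n using Nat.induction_of_periodic_step (a := 3) (p := 6) (by norm_num) with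
  | base n h => interval_cases n <;> decide
  | step n hn ih => rw [geodesic_add_six hn, potential_shift, ih]; push_cast; ring

theorem inU_geodesic {n : ℕ} (hn : 3 ≤ n) : inU (geodesic n) := by
  induction n using Nat.induction_of_periodic_step (a := 3) (p := 6) (by norm_num) with
  | base n h => interval_cases n <;> unfold inU <;> decide
  | step n hn' ih => rw [geodesic_add_six hn']; exact inU_shift (ih hn')

def geodesicVertex (n : ℕ) : SodVert := ⟨geodesic n, sodVertex_geodesic n⟩

theorem exists_walk_geodesicVertex (n : ℕ) :
    ∃ w : sodaliteGraph.Walk sodO (geodesicVertex n), w.length = n := by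
  induction n with
  | zero => exact ⟨.nil, rfl⟩
  | succ n ih =>
    obtain ⟨w, hw⟩ := ih
    have hadj : sodaliteGraph.Adj (geodesicVertex n) (geodesicVertex (n + 1)) :=
      sqDist_geodesic_succ n
    exact ⟨w.concat hadj, by rw [SimpleGraph.Walk.length_concat, hw]⟩

theorem dis_geodesicVertex (n : ℕ) : dis (geodesicVertex n) = n := by
  obtain ⟨w, hw⟩ := exists_walk_geodesicVertex n
  have hpot : potential (geodesicVertex n).1 = potential sodO.1 + 2 * w.length := by
    change potential (geodesic n) = potential (geodesic 0) + 2 * w.length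
    rw [hw, potential_geodesic, potential_geodesic]
    ring
  rw [dis, SimpleGraph.dist_eq_length_of_apply_eq (fun P : SodVert => potential P.1) two_pos
    (fun P Q h => potential_le_of_adj P.2 Q.2 h) w hpot, hw]

theorem exists_geodesic_eq_of_inStrip {p : ℤ × ℤ × ℤ} (hv : SodVertex p) (hp : InStrip p) :
    ∃ n, geodesic n = p := by
  obtain ⟨x, y, z⟩ := p
  obtain ⟨⟨hxy, hy, -⟩, rfl, hstrip⟩ := hp
  simp only [SodVertex, add_zero, sub_zero, zero_add, zero_sub] at hv hxy hy hstrip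
  obtain ⟨n₀, hn₀, hbase⟩ : ∃ n₀ ∈ [3, 4, 6, 7],
      (geodesic n₀).1 = x - 4 * (y / 4) ∧ (geodesic n₀).2.1 = y - 4 * (y / 4) ∧
        (geodesic n₀).2.2 = 0 := by
    simp only [List.exists_mem_cons_iff, List.not_mem_nil, false_and, exists_false, or_false,
      geodesic, and_true]
    omega
  refine ⟨n₀ + 6 * (y / 4).toNat, ?_⟩
  rw [geodesic_add_six_mul (by simp at hn₀; omega), Prod.ext_iff, Prod.ext_iff]
  simp only
  omega

theorem dis_eq_and_inStrip_iff (P : SodVert) (n : ℕ) :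
    dis P = n ∧ InStrip P.1 ↔ P = geodesicVertex n ∧ InStrip (geodesic n) := by
  constructor
  · rintro ⟨hdis, hP⟩
    obtain ⟨m, hm⟩ := exists_geodesic_eq_of_inStrip P.2 hP
    obtain rfl : P = geodesicVertex m := Subtype.ext hm.symm
    rw [dis_geodesicVertex] at hdis
    exact ⟨hdis ▸ rfl, hdis ▸ hm ▸ hP⟩
  · rintro ⟨rfl, hn⟩
    exact ⟨dis_geodesicVertex n, hn⟩

theorem Sbar0_natCast (n : ℕ) : Sbar0 n = if InStrip (geodesic n) then 1 else 0 := by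
  have hset : {P : SodVert | (dis P : ℤ) = n ∧ InStrip P.1} =
      {P | P = geodesicVertex n ∧ InStrip (geodesic n)} := by
    ext P
    exact (Nat.cast_inj.and Iff.rfl).trans (dis_eq_and_inStrip_iff P n)
  change Set.ncard {P : SodVert | (dis P : ℤ) = n ∧ InStrip P.1} = _
  rw [hset]
  split_ifs with h <;> simp [h]

end Sodalite

/-- Eventually, `S̄₀(n) = S̄₀(n-6)`: `S̄₀` is eventually periodic with period 6. -/
theorem sodalite_Sbar0_periodic :
    ∃ N : ℤ, ∀ n : ℤ, N ≤ n → Sbar0 n = Sbar0 (n - 6) := by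
  refine ⟨9, fun n hn => ?_⟩
  lift n to ℕ using (by omega)
  obtain ⟨m, rfl⟩ := Nat.exists_eq_add_of_le' (show 6 ≤ n by omega)
  have hm : 3 ≤ m := by omega
  rw [show ((m + 6 : ℕ) : ℤ) - 6 = m by push_cast; ring, Sodalite.Sbar0_natCast,
    Sodalite.Sbar0_natCast, Sodalite.geodesic_add_six hm]
  simp only [Sodalite.inStrip_shift_iff (Sodalite.inU_geodesic hm)]
end

section
/- Every vertex of the sodalite graph has degree exactly 4: for each P ∈ V, the set {Q ∈ V : the squared Euclidean distance from P to Q equals 2} has exactly 4 elements. -/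
/-! Squared distance 2 in ℤ³ means a step along one of the twelve vectors `(±1, ±1, 0)` up to
permutation, and membership in the vertex set depends only on the coordinates modulo 4. So the
degree of a vertex is the number of these twelve steps that stay in the vertex set, a quantity that
depends only on the residue class of the vertex in `(ZMod 4)³`; checking the 64 classes shows it is
always 4. -/

def sqDistTwoSteps : Finset (ℤ × ℤ × ℤ) :=
  {(1, 1, 0), (1, -1, 0), (-1, 1, 0), (-1, -1, 0),
   (1, 0, 1), (1, 0, -1), (-1, 0, 1), (-1, 0, -1),
   (0, 1, 1), (0, 1, -1), (0, -1, 1), (0, -1, -1)}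

lemma sqDist_add_eq_two_iff (p d : ℤ × ℤ × ℤ) : sqDist p (p + d) = 2 ↔ d ∈ sqDistTwoSteps := by
  obtain ⟨u, v, w⟩ := d
  have hsq : sqDist p (p + (u, v, w)) = u ^ 2 + v ^ 2 + w ^ 2 := by
    simp only [sqDist, Prod.fst_add, Prod.snd_add]
    ring
  rw [hsq]
  constructor
  · intro h
    obtain ⟨hu1, hu2⟩ : -1 ≤ u ∧ u ≤ 1 := by constructor <;> nlinarith [sq_nonneg v, sq_nonneg w]
    obtain ⟨hv1, hv2⟩ : -1 ≤ v ∧ v ≤ 1 := by constructor <;> nlinarith [sq_nonneg u, sq_nonneg w]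
    obtain ⟨hw1, hw2⟩ : -1 ≤ w ∧ w ≤ 1 := by constructor <;> nlinarith [sq_nonneg u, sq_nonneg v]
    interval_cases u <;> interval_cases v <;> interval_cases w <;> revert h <;> decide
  · intro h
    fin_cases h <;> rfl

def SodVertexMod4 (a : ZMod 4 × ZMod 4 × ZMod 4) : Prop :=
  a.1 + a.2.1 ≠ 0 ∧ a.1 - a.2.1 ≠ 0 ∧ a.2.1 + a.2.2 ≠ 0 ∧ a.2.1 - a.2.2 ≠ 0 ∧
    a.2.2 + a.1 ≠ 0 ∧ a.2.2 - a.1 ≠ 0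

instance : DecidablePred SodVertexMod4 := fun a => by unfold SodVertexMod4; infer_instance

def reduceMod4 : ℤ × ℤ × ℤ →+ ZMod 4 × ZMod 4 × ZMod 4 :=
  (Int.castAddHom (ZMod 4)).prodMap ((Int.castAddHom (ZMod 4)).prodMap (Int.castAddHom (ZMod 4)))

lemma sodVertex_iff_mod4 (p : ℤ × ℤ × ℤ) : SodVertex p ↔ SodVertexMod4 (reduceMod4 p) := by
  have four_dvd_iff (a : ℤ) : 4 ∣ a ↔ (a : ZMod 4) = 0 := (ZMod.intCast_zmod_eq_zero_iff_dvd a 4).symm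
  simp only [SodVertex, SodVertexMod4, four_dvd_iff, Int.cast_add, Int.cast_sub, ne_eq]
  rfl

lemma card_filter_sodVertexMod4_add_steps (a : ZMod 4 × ZMod 4 × ZMod 4)
    (ha : SodVertexMod4 a) :
    (sqDistTwoSteps.filter fun d => SodVertexMod4 (a + reduceMod4 d)).card = 4 := by
  revert a
  decide

/-- Every vertex of the sodalite graph has exactly 4 neighbours. -/
theorem sodalite_degree_four (p : ℤ × ℤ × ℤ) (hp : SodVertex p) :
    Set.ncard {q : ℤ × ℤ × ℤ | SodVertex q ∧ sqDist p q = 2} = 4 := by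
  have hneighbours : {q : ℤ × ℤ × ℤ | SodVertex q ∧ sqDist p q = 2} =
      (sqDistTwoSteps.filter fun d => SodVertex (p + d)).image (p + ·) := by
    ext q
    obtain ⟨d, rfl⟩ : ∃ d, q = p + d := ⟨q - p, by abel⟩
    simp [sqDist_add_eq_two_iff, and_comm]
  rw [hneighbours, Set.ncard_coe_finset, Finset.card_image_of_injective _ (add_right_injective p)]
  simp only [sodVertex_iff_mod4, map_add]
  exact card_filter_sodVertexMod4_add_steps _ ((sodVertex_iff_mod4 p).mp hp)
end
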